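/- arXiv:1603.04734 — 5 statements merged into one kernel-verified Lean document; each statement's English description precedes it below -/
import Mathlib

section
/- If A(ε) admits a Laurent (h_A, k_A)-expansion and B(ε) admits a pivotal Laurent (h_B, k_B)-expansion, then on some interval (0, ε'₀] with B(ε) ≠ 0, the quotient D(ε) = A(ε)/B(ε) admits a Laurent (h_D, k_D)-expansion with h_D = h_A − h_B, k_D = min(k_A − h_B, k_B − 2h_B + h_A), and coefficients determined recursively by d_{h_D + r} = b_{h_B}^{−1}(a_{h_A + r} − Σ_{1 ≤ i ≤ r} b_{h_B + i} d_{h_D + r − i}) for r = 0,…,k_D − h_D; the remainder satisfies o_D(ε^{k_D})/ε^{k_D} → 0 as ε → 0+. This expansion is pivotal if and only if a_{h_A}/b_{h_B} ≠ 0. -/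
open Filter Topology

/-- A Laurent `(h,k)`-asymptotic expansion of `A` on `(0, ε₀]`:
`A(ε) = Σ_{l=h}^{k} a l ε^l + o ε` with `o ε / ε^k → 0` as `ε → 0+`. -/
def IsLaurentExpansion (ε0 : ℝ) (A : ℝ → ℝ) (h k : ℤ) (a : ℤ → ℝ) (o : ℝ → ℝ) : Prop :=
  (∀ ε ∈ Set.Ioc (0:ℝ) ε0, A ε = (∑ l ∈ Finset.Icc h k, a l * ε ^ l) + o ε) ∧
  Filter.Tendsto (fun ε => o ε / ε ^ k) (nhdsWithin 0 (Set.Ioi 0)) (nhds 0)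

/-!
Write `A = S_A + o(ε^{k_A})` with `S_A = ε^{h_A} P_A(ε)`, where `P_A` is a truncation of the
power series `F_A = Σ_j a_{h_A+j} X^j`, and likewise for `B`. Since `b_{h_B} ≠ 0`, `F_B` is
invertible, and the coefficients of `F_D = F_A / F_B` satisfy the stated recursion, which is just
the Cauchy product `F_D F_B = F_A`. Truncations of `F_D`, `F_B`, `F_A` multiply correctly up to
degree `N = min(k_A - h_A, k_B - h_B)`, so in
`A - S_D B = (A - S_A) + (S_A - S_D S_B) - S_D (B - S_B)` all three terms are `o(ε^{h_A+N})`.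
Finally `B ~ b_{h_B} ε^{h_B}`, so `B ≠ 0` near `0` and `1/B = O(ε^{-h_B})`, whence
`A/B - S_D = o(ε^{k_D})` with `k_D = h_A - h_B + N`.
-/

open Asymptotics Finset

lemma isLittleO_zpow_zpow_nhdsGT {m n : ℤ} (hmn : m < n) :
    (fun ε : ℝ => ε ^ n) =o[𝓝[>] 0] fun ε => ε ^ m := by
  have hpos : ∀ᶠ ε : ℝ in 𝓝[>] 0, 0 < ε := self_mem_nhdsWithin
  rw [isLittleO_iff_tendsto' (hpos.mono fun ε hε h0 => absurd h0 (zpow_ne_zero _ hε.ne'))]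
  have hlim : Tendsto (fun ε : ℝ => ε ^ (n - m)) (𝓝[>] 0) (𝓝 0) := by
    have := (continuousAt_zpow₀ (0 : ℝ) (n - m) (.inr (sub_nonneg.2 hmn.le))).tendsto
    rw [zero_zpow _ (sub_ne_zero.2 hmn.ne')] at this
    exact this.mono_left nhdsWithin_le_nhds
  exact hlim.congr' (hpos.mono fun ε hε => zpow_sub₀ hε.ne' n m)

lemma isBigO_zpow_zpow_nhdsGT {m n : ℤ} (hmn : m ≤ n) :
    (fun ε : ℝ => ε ^ n) =O[𝓝[>] 0] fun ε => ε ^ m := by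
  rcases hmn.lt_or_eq with hmn | rfl
  exacts [(isLittleO_zpow_zpow_nhdsGT hmn).isBigO, isBigO_refl _ _]

lemma zpow_mul_zpow_eventuallyEq (m n : ℤ) :
    (fun ε : ℝ => ε ^ m * ε ^ n) =ᶠ[𝓝[>] 0] fun ε => ε ^ (m + n) :=
  eventually_mem_nhdsWithin.mono fun _ hε => (zpow_add₀ (ne_of_gt hε) m n).symm

lemma isBigO_sum_mul_zpow {m : ℤ} (s : Finset ℤ) (f : ℤ → ℝ) (hs : ∀ l ∈ s, m ≤ l) :
    (fun ε : ℝ => ∑ l ∈ s, f l * ε ^ l) =O[𝓝[>] 0] fun ε => ε ^ m :=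
  IsBigO.fun_sum fun l hl => (isBigO_const_mul_self _ _ _).trans (isBigO_zpow_zpow_nhdsGT (hs l hl))

lemma exists_Ioc_subset_of_eventually {P : ℝ → Prop} {ε0 : ℝ} (hε0 : 0 < ε0)
    (hP : ∀ᶠ ε in 𝓝[>] 0, P ε) : ∃ ε1, 0 < ε1 ∧ ε1 ≤ ε0 ∧ ∀ ε ∈ Set.Ioc 0 ε1, P ε := by
  obtain ⟨u, hu, hsub⟩ := mem_nhdsGT_iff_exists_Ioc_subset.1 hP
  exact ⟨min u ε0, lt_min hu hε0, min_le_right _ _,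
    fun ε hε => hsub ⟨hε.1, hε.2.trans (min_le_left _ _)⟩⟩

lemma Asymptotics.IsEquivalent.eventually_ne_zero_of_zpow {B : ℝ → ℝ} {c : ℝ} {h : ℤ}
    (hB : B ~[𝓝[>] 0] fun ε => c * ε ^ h) (hc : c ≠ 0) : ∀ᶠ ε in 𝓝[>] 0, B ε ≠ 0 := by
  filter_upwards [hB.isBigO_symm.eq_zero_imp, self_mem_nhdsWithin] with ε hε hpos hB0
  exact mul_ne_zero hc (zpow_ne_zero _ (ne_of_gt hpos)) (hε hB0)

lemma Asymptotics.IsEquivalent.isBigO_inv_zpow {B : ℝ → ℝ} {c : ℝ} {h : ℤ}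
    (hB : B ~[𝓝[>] 0] fun ε => c * ε ^ h) : (fun ε => (B ε)⁻¹) =O[𝓝[>] 0] fun ε => ε ^ (-h) := by
  have hinv : (fun ε => c * ε ^ h)⁻¹ = fun ε : ℝ => c⁻¹ * ε ^ (-h) := by
    ext ε; simp only [Pi.inv_apply, mul_inv, zpow_neg]
  have := hB.inv.isBigO
  rw [hinv] at this
  exact this.trans (isBigO_const_mul_self _ _ _)

namespace IsLaurentExpansion

variable {ε0 : ℝ} {A : ℝ → ℝ} {h k : ℤ} {f : ℤ → ℝ} {o : ℝ → ℝ}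

lemma isLittleO (H : IsLaurentExpansion ε0 A h k f o) : o =o[𝓝[>] 0] fun ε => ε ^ k := by
  refine (isLittleO_iff_tendsto' ?_).2 H.2
  filter_upwards [self_mem_nhdsWithin] with ε hε h0
  exact absurd h0 (zpow_ne_zero _ (ne_of_gt hε))

lemma isLittleO_sub_sum (H : IsLaurentExpansion ε0 A h k f o) (hε0 : 0 < ε0) :
    (fun ε => A ε - ∑ l ∈ Icc h k, f l * ε ^ l) =o[𝓝[>] 0] fun ε => ε ^ k :=
  H.isLittleO.congr' (eventually_of_mem (Ioc_mem_nhdsGT hε0) fun ε hε => by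
    simp only [H.1 ε hε, add_sub_cancel_left]) EventuallyEq.rfl

lemma isEquivalent (H : IsLaurentExpansion ε0 A h k f o) (hε0 : 0 < ε0) (hhk : h ≤ k)
    (hf : f h ≠ 0) : A ~[𝓝[>] 0] fun ε => f h * ε ^ h := by
  have hrem := (H.isLittleO_sub_sum hε0).trans_isBigO (isBigO_zpow_zpow_nhdsGT hhk)
  have htail := (isBigO_sum_mul_zpow (Ioc h k) f fun l hl => (mem_Ioc.1 hl).1).trans_isLittleO
    (isLittleO_zpow_zpow_nhdsGT (lt_add_one h))
  refine IsLittleO.isEquivalent ?_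
  refine ((hrem.add htail).congr_left fun ε => ?_).trans_isBigO (isBigO_self_const_mul hf _ _)
  rw [← sum_Ioc_add_eq_sum_Icc hhk]
  simp only [Pi.sub_apply]
  ring

end IsLaurentExpansion

noncomputable def shiftedSeries (f : ℤ → ℝ) (h : ℤ) : PowerSeries ℝ :=
  PowerSeries.mk fun j => f (h + j)

lemma X_pow_dvd_trunc_sub_trunc_mul_trunc {R : Type*} [CommRing R] {f g p : PowerSeries R}
    (hfg : f * g = p) {m n₁ n₂ n₃ : ℕ} (h₁ : m ≤ n₁) (h₂ : m ≤ n₂) (h₃ : m ≤ n₃) :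
    (Polynomial.X : Polynomial R) ^ m ∣
      PowerSeries.trunc n₃ p - PowerSeries.trunc n₁ f * PowerSeries.trunc n₂ g := by
  rw [Polynomial.X_pow_dvd_iff]
  intro r hr
  rw [Polynomial.coeff_sub, PowerSeries.coeff_trunc, if_pos (by omega), ← hfg,
    PowerSeries.coeff_mul_eq_coeff_trunc_mul_trunc₂ (a := n₁) (b := n₂) f g (by omega) (by omega),
    ← Polynomial.coe_mul, Polynomial.coeff_coe, sub_self]

lemma sum_Icc_mul_zpow_eq_eval_trunc (f : ℤ → ℝ) (h : ℤ) (n : ℕ) {ε : ℝ} (hε : ε ≠ 0) :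
    ∑ l ∈ Icc h (h + n), f l * ε ^ l =
      ε ^ h * (PowerSeries.trunc (n + 1) (shiftedSeries f h)).eval ε := by
  rw [Int.Icc_eq_finset_map, sum_map, Polynomial.eval, PowerSeries.eval₂_trunc_eq_sum_range,
    mul_sum]
  have : (h + n + 1 - h).toNat = n + 1 := by omega
  rw [this]
  refine sum_congr rfl fun j _ => ?_
  simp only [Function.Embedding.trans_apply, Nat.castEmbedding_apply, addLeftEmbedding_apply,
    shiftedSeries, PowerSeries.coeff_mk, RingHom.id_apply, zpow_add₀ hε, zpow_natCast]
  ring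

lemma exists_shiftedSeries_mul_eq (a b : ℤ → ℝ) (hA hB : ℤ) (hb : b hB ≠ 0) :
    ∃ d : ℤ → ℝ, shiftedSeries d (hA - hB) * shiftedSeries b hB = shiftedSeries a hA := by
  refine ⟨fun l => PowerSeries.coeff (l - (hA - hB)).toNat
    (shiftedSeries a hA * (shiftedSeries b hB)⁻¹), ?_⟩
  have hd : shiftedSeries (fun l => PowerSeries.coeff (l - (hA - hB)).toNat
      (shiftedSeries a hA * (shiftedSeries b hB)⁻¹)) (hA - hB) =
      shiftedSeries a hA * (shiftedSeries b hB)⁻¹ := by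
    ext j; simp [shiftedSeries]
  rw [hd, mul_assoc, PowerSeries.inv_mul_cancel _ (by simpa [shiftedSeries] using hb), mul_one]

lemma eq_inv_mul_sub_sum_of_shiftedSeries_mul_eq {a b d : ℤ → ℝ} {hA hB : ℤ}
    (hd : shiftedSeries d (hA - hB) * shiftedSeries b hB = shiftedSeries a hA) (hb : b hB ≠ 0)
    (r : ℕ) :
    d (hA - hB + r) = (b hB)⁻¹ *
      (a (hA + r) - ∑ i ∈ Icc 1 (r : ℤ), b (hB + i) * d (hA - hB + r - i)) := by
  have hcoeff := congrArg (PowerSeries.coeff r) hd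
  rw [mul_comm, PowerSeries.coeff_mul, Finset.Nat.sum_antidiagonal_eq_sum_range_succ
    (fun i j => PowerSeries.coeff i (shiftedSeries b hB) * PowerSeries.coeff j _),
    sum_range_succ'] at hcoeff
  have hsum : ∑ i ∈ Icc 1 (r : ℤ), b (hB + i) * d (hA - hB + r - i) =
      ∑ i ∈ range r, b (hB + (i + 1 : ℕ)) * d (hA - hB + (r - (i + 1) : ℕ)) := by
    rw [Int.Icc_eq_finset_map, sum_map]
    have : ((r : ℤ) + 1 - 1).toNat = r := by omega
    rw [this]
    refine sum_congr rfl fun i hi => ?_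
    have := mem_range.1 hi
    simp only [Function.Embedding.trans_apply, Nat.castEmbedding_apply, addLeftEmbedding_apply]
    congr 2 <;> push_cast [Nat.cast_sub (by omega : i + 1 ≤ r)] <;> ring
  simp only [shiftedSeries, PowerSeries.coeff_mk, Nat.sub_zero, Nat.cast_zero, add_zero] at hcoeff
  rw [hsum, eq_inv_mul_iff_mul_eq₀ hb]
  linarith

lemma isBigO_sum_sub_sum_mul_sum {a b d : ℤ → ℝ} {hA hB : ℤ}
    (hd : shiftedSeries d (hA - hB) * shiftedSeries b hB = shiftedSeries a hA)
    {nA nB N : ℕ} (hNA : N ≤ nA) (hNB : N ≤ nB) :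
    (fun ε : ℝ => ∑ l ∈ Icc hA (hA + nA), a l * ε ^ l -
      (∑ l ∈ Icc (hA - hB) (hA - hB + N), d l * ε ^ l) * ∑ l ∈ Icc hB (hB + nB), b l * ε ^ l)
      =O[𝓝[>] 0] fun ε => ε ^ (hA + N + 1) := by
  obtain ⟨Q, hQ⟩ := X_pow_dvd_trunc_sub_trunc_mul_trunc hd le_rfl
    (by omega : N + 1 ≤ nB + 1) (by omega : N + 1 ≤ nA + 1)
  have hQ_bdd : (fun ε => Q.eval ε) =O[𝓝[>] 0] fun _ => (1 : ℝ) :=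
    (Q.continuous.tendsto 0).isBigO_one ℝ |>.mono nhdsWithin_le_nhds
  refine ((isBigO_refl (fun ε : ℝ => ε ^ (hA + N + 1)) _).mul hQ_bdd).congr' ?_ (by simp)
  filter_upwards [self_mem_nhdsWithin] with ε hpos
  have hε : ε ≠ 0 := ne_of_gt hpos
  have heval := congrArg (Polynomial.eval ε) hQ
  simp only [Polynomial.eval_sub, Polynomial.eval_mul, Polynomial.eval_pow,
    Polynomial.eval_X] at heval
  rw [sum_Icc_mul_zpow_eq_eval_trunc _ _ _ hε, sum_Icc_mul_zpow_eq_eval_trunc _ _ _ hε,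
    sum_Icc_mul_zpow_eq_eval_trunc _ _ _ hε, mul_mul_mul_comm, ← zpow_add₀ hε, sub_add_cancel,
    ← mul_sub, heval, zpow_add₀ hε, zpow_add₀ hε, zpow_natCast, zpow_one]
  ring

lemma IsLaurentExpansion.isLittleO_div_sub_sum {ε0 : ℝ} {A B : ℝ → ℝ} {hA hB : ℤ} {nA nB : ℕ}
    {a b d : ℤ → ℝ} {oA oB : ℝ → ℝ} (HA : IsLaurentExpansion ε0 A hA (hA + nA) a oA)
    (HB : IsLaurentExpansion ε0 B hB (hB + nB) b oB) (hε0 : 0 < ε0) (hb : b hB ≠ 0)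
    (hd : shiftedSeries d (hA - hB) * shiftedSeries b hB = shiftedSeries a hA)
    {N : ℕ} (hNA : N ≤ nA) (hNB : N ≤ nB) :
    (fun ε => A ε / B ε - ∑ l ∈ Icc (hA - hB) (hA - hB + N), d l * ε ^ l)
      =o[𝓝[>] 0] fun ε => ε ^ (hA - hB + N) := by
  set SD := fun ε : ℝ => ∑ l ∈ Icc (hA - hB) (hA - hB + N), d l * ε ^ l
  have hBeq := HB.isEquivalent hε0 (by omega) hb
  have hA_rem := (HA.isLittleO_sub_sum hε0).trans_isBigO
    (isBigO_zpow_zpow_nhdsGT (by omega : hA + N ≤ hA + nA))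
  have hprod := (isBigO_sum_sub_sum_mul_sum hd hNA hNB).trans_isLittleO
    (isLittleO_zpow_zpow_nhdsGT (lt_add_one (hA + N)))
  have hSD : SD =O[𝓝[>] 0] fun ε => ε ^ (hA - hB) :=
    isBigO_sum_mul_zpow _ d fun l hl => (mem_Icc.1 hl).1
  have hB_rem := ((hSD.mul_isLittleO (HB.isLittleO_sub_sum hε0)).congr' EventuallyEq.rfl
    (zpow_mul_zpow_eventuallyEq _ _)).trans_isBigO
    (isBigO_zpow_zpow_nhdsGT (by omega : hA + N ≤ hA - hB + (hB + nB)))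
  have hnum : (fun ε => A ε - SD ε * B ε) =o[𝓝[>] 0] fun ε => ε ^ (hA + N) :=
    ((hA_rem.add hprod).sub hB_rem).congr_left fun ε => by simp only [SD]; ring
  refine ((hnum.mul_isBigO hBeq.isBigO_inv_zpow).congr' ?_
    (zpow_mul_zpow_eventuallyEq _ _)).congr_right fun ε => congrArg (ε ^ ·) (by ring)
  filter_upwards [hBeq.eventually_ne_zero_of_zpow hb] with ε hBε
  field_simp
  ring

theorem laurent_expansion_div_general (ε0 : ℝ) (hε0 : 0 < ε0)
    (A B : ℝ → ℝ) (hA kA hB kB : ℤ) (hhkA : hA ≤ kA) (hhkB : hB ≤ kB)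
    (a b : ℤ → ℝ) (oA oB : ℝ → ℝ)
    (HA : IsLaurentExpansion ε0 A hA kA a oA)
    (HB : IsLaurentExpansion ε0 B hB kB b oB) (hpiv : b hB ≠ 0) :
    ∃ ε0' : ℝ, 0 < ε0' ∧ ε0' ≤ ε0 ∧ (∀ ε ∈ Set.Ioc (0:ℝ) ε0', B ε ≠ 0) ∧
      ∃ (d : ℤ → ℝ) (oD : ℝ → ℝ),
        IsLaurentExpansion ε0' (fun ε => A ε / B ε) (hA - hB)
          (min (kA - hB) (kB - 2 * hB + hA)) d oD ∧
        (∀ r : ℤ, 0 ≤ r → r ≤ min (kA - hB) (kB - 2 * hB + hA) - (hA - hB) →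
          d (hA - hB + r) = (b hB)⁻¹ *
            (a (hA + r) - ∑ i ∈ Finset.Icc 1 r, b (hB + i) * d (hA - hB + r - i))) ∧
        (d (hA - hB) ≠ 0 ↔ a hA / b hB ≠ 0) := by
  obtain ⟨ε1, hε1, hε1_le, hBne⟩ := exists_Ioc_subset_of_eventually hε0
    ((HB.isEquivalent hε0 hhkB hpiv).eventually_ne_zero_of_zpow hpiv)
  obtain ⟨d, hd⟩ := exists_shiftedSeries_mul_eq a b hA hB hpiv
  obtain ⟨nA, rfl⟩ : ∃ n : ℕ, kA = hA + n := ⟨(kA - hA).toNat, by omega⟩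
  obtain ⟨nB, rfl⟩ : ∃ n : ℕ, kB = hB + n := ⟨(kB - hB).toNat, by omega⟩
  have hkD : min (hA + nA - hB) (hB + nB - 2 * hB + hA) = hA - hB + (min nA nB : ℕ) := by
    push_cast; omega
  refine ⟨ε1, hε1, hε1_le, hBne, d,
    fun ε => A ε / B ε - ∑ l ∈ Icc (hA - hB) (hA - hB + (min nA nB : ℕ)), d l * ε ^ l,
    ?_, ?_, ?_⟩
  · rw [hkD]
    exact ⟨fun ε _ => by ring, (HA.isLittleO_div_sub_sum HB hε0 hpiv hd (min_le_left _ _)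
      (min_le_right _ _)).tendsto_div_nhds_zero⟩
  · intro r hr _
    lift r to ℕ using hr
    exact eq_inv_mul_sub_sum_of_shiftedSeries_mul_eq hd hpiv r
  · have hd0 := eq_inv_mul_sub_sum_of_shiftedSeries_mul_eq hd hpiv 0
    rw [Nat.cast_zero, add_zero, add_zero, Icc_eq_empty_of_lt zero_lt_one, sum_empty,
      sub_zero] at hd0
    rw [hd0, div_eq_inv_mul]

/-- Lemma 2 (v): division rule for Laurent asymptotic expansions. -/
theorem laurent_expansion_div (ε0 : ℝ) (hε0 : 0 < ε0) (hε1 : ε0 ≤ 1)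
    (A B : ℝ → ℝ) (hA kA hB kB : ℤ) (hhkA : hA ≤ kA) (hhkB : hB ≤ kB)
    (a b : ℤ → ℝ) (oA oB : ℝ → ℝ)
    (HA : IsLaurentExpansion ε0 A hA kA a oA)
    (HB : IsLaurentExpansion ε0 B hB kB b oB) (hpiv : b hB ≠ 0) :
    ∃ ε0' : ℝ, 0 < ε0' ∧ ε0' ≤ ε0 ∧ (∀ ε ∈ Set.Ioc (0:ℝ) ε0', B ε ≠ 0) ∧
      ∃ (d : ℤ → ℝ) (oD : ℝ → ℝ),
        IsLaurentExpansion ε0' (fun ε => A ε / B ε) (hA - hB)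
          (min (kA - hB) (kB - 2 * hB + hA)) d oD ∧
        (∀ r : ℤ, 0 ≤ r → r ≤ min (kA - hB) (kB - 2 * hB + hA) - (hA - hB) →
          d (hA - hB + r) = (b hB)⁻¹ *
            (a (hA + r) - ∑ i ∈ Finset.Icc 1 r, b (hB + i) * d (hA - hB + r - i))) ∧
        (d (hA - hB) ≠ 0 ↔ a hA / b hB ≠ 0) :=
  laurent_expansion_div_general ε0 hε0 A B hA kA hB kB hhkA hhkB a b oA oB HA HB hpiv
end

section
/- Let (p_{ij}) be a stochastic-type matrix of nonnegative reals on a finite state space X, and let r₁, r₂, i', j' be distinct states with (1 − p_{r₁r₁}) > 0, (1 − p_{r₂r₂}) − p_{r₂r₁} p_{r₁r₂}/(1 − p_{r₁r₁}) > 0, and symmetrically (1 − p_{r₂r₂}) > 0, (1 − p_{r₁r₁}) − p_{r₁r₂} p_{r₂r₁}/(1 − p_{r₂r₂}) > 0. Define the one-step reduction _r p_{ij} = p_{ij} + p_{ir} p_{rj}/(1 − p_{rr}). Then the two-step reductions commute: reducing first by r₁ and then by r₂ gives the same transition probability from i' to j' as reducing first by r₂ and then by r₁; both equal p_{i'j'}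 + [p_{i'r₁} p_{r₁j'}(1 − p_{r₂r₂}) + p_{i'r₁} p_{r₁r₂} p_{r₂j'} + p_{i'r₂} p_{r₂j'}(1 − p_{r₁r₁}) + p_{i'r₂} p_{r₂r₁} p_{r₁j'}] / [(1 − p_{r₁r₁})(1 − p_{r₂r₂}) − p_{r₁r₂} p_{r₂r₁}]. -/
/-!
Reducing by `r₁` and then by `r₂` is Gaussian elimination of the block `R = {r₁, r₂}` of `I - P`:
after the first step the pivot at `r₂` is `D / (1 - p r₁ r₁)`, where
`D = (1 - p r₁ r₁) * (1 - p r₂ r₂) - p r₁ r₂ * p r₂ r₁` is the determinant of `(I - P)_RR`,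
and the double reduction is the Schur complement `p i j + p_iR (I - P)_RR⁻¹ p_Rj`.
This expression is symmetric in `r₁` and `r₂`.
-/

open Filter Topology

noncomputable def reduceStep {X : Type*} (p : X → X → ℝ) (r : X) : X → X → ℝ :=
  fun i j => p i j + p i r * p r j / (1 - p r r)

section

variable {X : Type*} (p : X → X → ℝ) (r₁ r₂ : X)

theorem one_sub_reduceStep_self (h₁ : 1 - p r₁ r₁ ≠ 0) :
    1 - reduceStep p r₁ r₂ r₂ =
      ((1 - p r₁ r₁) * (1 - p r₂ r₂) - p r₁ r₂ * p r₂ r₁) / (1 - p r₁ r₁) := by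
  unfold reduceStep
  field_simp
  ring

theorem reduceStep_reduceStep_apply (h₁ : 1 - p r₁ r₁ ≠ 0)
    (hD : (1 - p r₁ r₁) * (1 - p r₂ r₂) - p r₁ r₂ * p r₂ r₁ ≠ 0) (i j : X) :
    reduceStep (reduceStep p r₁) r₂ i j =
      p i j +
        (p i r₁ * p r₁ j * (1 - p r₂ r₂) + p i r₁ * p r₁ r₂ * p r₂ j
          + p i r₂ * p r₂ j * (1 - p r₁ r₁) + p i r₂ * p r₂ r₁ * p r₁ j)
        / ((1 - p r₁ r₁) * (1 - p r₂ r₂) - p r₁ r₂ * p r₂ r₁) := by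
  rw [reduceStep, one_sub_reduceStep_self p r₁ r₂ h₁]
  unfold reduceStep
  field_simp
  ring

end

theorem reduceStep_comm_general (X : Type*)
    (p : X → X → ℝ)
    (r₁ r₂ i' j' : X)
    (hd1 : 0 < 1 - p r₁ r₁)
    (hd2 : 0 < (1 - p r₂ r₂) - p r₂ r₁ * p r₁ r₂ / (1 - p r₁ r₁))
    (hd1' : 0 < 1 - p r₂ r₂) :
    reduceStep (reduceStep p r₁) r₂ i' j' = reduceStep (reduceStep p r₂) r₁ i' j' ∧
    reduceStep (reduceStep p r₁) r₂ i' j' =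
      p i' j' +
        (p i' r₁ * p r₁ j' * (1 - p r₂ r₂) + p i' r₁ * p r₁ r₂ * p r₂ j'
          + p i' r₂ * p r₂ j' * (1 - p r₁ r₁) + p i' r₂ * p r₂ r₁ * p r₁ j')
        / ((1 - p r₁ r₁) * (1 - p r₂ r₂) - p r₁ r₂ * p r₂ r₁) := by
  have hD : 0 < (1 - p r₁ r₁) * (1 - p r₂ r₂) - p r₁ r₂ * p r₂ r₁ := by
    have hfactor : (1 - p r₁ r₁) * (1 - p r₂ r₂) - p r₁ r₂ * p r₂ r₁ =
        (1 - p r₁ r₁) * ((1 - p r₂ r₂) - p r₂ r₁ * p r₁ r₂ / (1 - p r₁ r₁)) := by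
      field_simp
    rw [hfactor]
    positivity
  have hD' : 0 < (1 - p r₂ r₂) * (1 - p r₁ r₁) - p r₂ r₁ * p r₁ r₂ := by
    linarith
  rw [reduceStep_reduceStep_apply p r₁ r₂ hd1.ne' hD.ne',
    reduceStep_reduceStep_apply p r₂ r₁ hd1'.ne' hD'.ne']
  exact ⟨by ring, rfl⟩

/-- the two-step state reductions excluding `r₁` then `r₂`, and excluding
`r₂` then `r₁`, commute, and both equal the stated symmetric closed form. -/
theorem reduceStep_comm (X : Type*) [DecidableEq X]
    (p : X → X → ℝ) (hnn : ∀ i j, 0 ≤ p i j)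
    (r₁ r₂ i' j' : X)
    (h12 : r₁ ≠ r₂) (hi1 : i' ≠ r₁) (hi2 : i' ≠ r₂) (hj1 : j' ≠ r₁) (hj2 : j' ≠ r₂)
    (hij : i' ≠ j')
    (hd1 : 0 < 1 - p r₁ r₁)
    (hd2 : 0 < (1 - p r₂ r₂) - p r₂ r₁ * p r₁ r₂ / (1 - p r₁ r₁))
    (hd1' : 0 < 1 - p r₂ r₂)
    (hd2' : 0 < (1 - p r₁ r₁) - p r₁ r₂ * p r₂ r₁ / (1 - p r₂ r₂)) :
    reduceStep (reduceStep p r₁) r₂ i' j' = reduceStep (reduceStep p r₂) r₁ i' j' ∧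
    reduceStep (reduceStep p r₁) r₂ i' j' =
      p i' j' +
        (p i' r₁ * p r₁ j' * (1 - p r₂ r₂) + p i' r₁ * p r₁ r₂ * p r₂ j'
          + p i' r₂ * p r₂ j' * (1 - p r₁ r₁) + p i' r₂ * p r₂ r₁ * p r₁ j')
        / ((1 - p r₁ r₁) * (1 - p r₂ r₂) - p r₁ r₂ * p r₂ r₁) :=
  reduceStep_comm_general X p r₁ r₂ i' j' hd1 hd2 hd1'
end

section
/- Suppose functions e_i(ε) and E_{ii}(ε) on (0, ε₀] satisfy 0 < e_i(ε) ≤ E_{ii}(ε), e_i admits a pivotal Laurent (m⁻, m⁺)-expansion with leading coefficient b[m⁻] > 0, and E_{ii} admits a pivotal Laurent (M⁻, M⁺)-expansion with leading coefficient B[M⁻] ≠ 0. Then M⁻ ≤ m⁻, and hence the quotient π_i(ε) = e_i(ε)/E_{ii}(ε) admits a pivotal Laurent (n⁻, n⁺)-expansion with n⁻ = m⁻ − M⁻ ≥ 0 and positive leading coefficient c[n⁻] = b[m⁻]/B[M⁻] > 0. -/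
open Filter Topology

/-!
Dividing out the leading powers, `e / ε^m⁻ = p + o(ε^(m⁺-m⁻))` and `E / ε^M⁻ = q + o(ε^(M⁺-M⁻))`
with polynomials `p`, `q` and `q 0 = B[M⁻] ≠ 0`. Hence `(e / E) ε^(M⁻-m⁻) = p / q + o(ε^N)`,
`N = min (m⁺-m⁻) (M⁺-M⁻)`, and since `p / q` is analytic at `0` its Taylor polynomial of degree
`N` supplies the coefficients of the quotient. The inequality `M⁻ ≤ m⁻` and the sign of `B[M⁻]`
come from letting `ε → 0+` in `0 < e ≤ E` after dividing by suitable powers of `ε`.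
-/

open Asymptotics Finset

theorem isBigO_pow_pow_of_le {𝕜 : Type*} [NormedField 𝕜] {m n : ℕ} (h : m ≤ n) :
    (fun x : 𝕜 => x ^ n) =O[𝓝 0] fun x => x ^ m := by
  rcases h.eq_or_lt with rfl | h
  · exact isBigO_refl _ _
  · exact (isLittleO_pow_pow h).isBigO

theorem HasFPowerSeriesAt.isLittleO_sub_sum_coeff {𝕜 : Type*} [NontriviallyNormedField 𝕜]
    {f : 𝕜 → 𝕜} {ps : FormalMultilinearSeries 𝕜 𝕜 𝕜} (hf : HasFPowerSeriesAt f ps 0) (N : ℕ) :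
    (fun x => f x - ∑ k ∈ range (N + 1), ps.coeff k * x ^ k) =o[𝓝 0] fun x => x ^ N := by
  have hO := hf.isBigO_sub_partialSum_pow (N + 1)
  simp only [zero_add, FormalMultilinearSeries.partialSum,
    FormalMultilinearSeries.apply_eq_pow_smul_coeff, smul_eq_mul, ← norm_pow] at hO
  simp only [mul_comm (ps.coeff _)]
  exact (isBigO_norm_right.mp hO).trans_isLittleO (isLittleO_pow_pow N.lt_succ_self)

theorem div_sub_div_isLittleO {α : Type*} {l : Filter α} {P Q p q g : α → ℝ} {p₀ q₀ : ℝ}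
    (hP : (fun x => P x - p x) =o[l] g) (hQ : (fun x => Q x - q x) =o[l] g)
    (hg : g =O[l] fun _ => (1 : ℝ)) (hp : Tendsto p l (𝓝 p₀)) (hq : Tendsto q l (𝓝 q₀))
    (hq₀ : q₀ ≠ 0) :
    (fun x => P x / Q x - p x / q x) =o[l] g := by
  have hQlim : Tendsto Q l (𝓝 q₀) := by
    simpa using ((isLittleO_one_iff ℝ).1 (hQ.trans_isBigO hg)).add hq
  have hinv : (fun x => (Q x * q x)⁻¹) =O[l] fun _ => (1 : ℝ) :=
    ((hQlim.mul hq).inv₀ (mul_ne_zero hq₀ hq₀)).isBigO_one ℝ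
  have hnum : (fun x => (P x - p x) * q x - p x * (Q x - q x)) =o[l] g := by
    refine IsLittleO.sub ?_ ?_
    · simpa using hP.mul_isBigO (hq.isBigO_one ℝ)
    · simpa using (hp.isBigO_one ℝ).mul_isLittleO hQ
  refine (hnum.mul_isBigO hinv).congr' ?_ (by simp)
  filter_upwards [hQlim.eventually_ne hq₀, hq.eventually_ne hq₀] with x hQx hqx
  field_simp
  ring

def shiftedPoly (a : ℤ → ℝ) (h : ℤ) (n : ℕ) (x : ℝ) : ℝ :=
  ∑ j ∈ range (n + 1), a (h + j) * x ^ j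

theorem shiftedPoly_zero (a : ℤ → ℝ) (h : ℤ) (n : ℕ) : shiftedPoly a h n 0 = a h := by
  simp [shiftedPoly, sum_range_succ']

theorem analyticAt_shiftedPoly (a : ℤ → ℝ) (h : ℤ) (n : ℕ) (x : ℝ) :
    AnalyticAt ℝ (shiftedPoly a h n) x :=
  Finset.analyticAt_fun_sum _ fun j _ => analyticAt_const.mul (analyticAt_id.pow j)

theorem tendsto_shiftedPoly (a : ℤ → ℝ) (h : ℤ) (n : ℕ) :
    Tendsto (shiftedPoly a h n) (𝓝[>] 0) (𝓝 (a h)) :=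
  shiftedPoly_zero a h n ▸
    ((analyticAt_shiftedPoly a h n 0).continuousAt.tendsto.mono_left nhdsWithin_le_nhds)

theorem sum_Icc_mul_zpow_eq (a : ℤ → ℝ) (h : ℤ) (n : ℕ) {x : ℝ} (hx : x ≠ 0) :
    ∑ l ∈ Icc h (h + n), a l * x ^ l = x ^ h * shiftedPoly a h n x := by
  rw [shiftedPoly, mul_sum]
  refine sum_nbij' (fun l => (l - h).toNat) (fun j => h + j) ?_ ?_ ?_ ?_ ?_
  all_goals simp only [mem_Icc, mem_range]
  · intro l hl; omega
  · intro j hj; omega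
  · intro l hl; omega
  · intro j _; omega
  · intro l hl
    obtain ⟨j, rfl⟩ := Int.le.dest hl.1
    rw [add_sub_cancel_left, Int.toNat_natCast, zpow_add₀ hx, zpow_natCast]
    ring

theorem IsLaurentExpansion.isLittleO_s14 {ε0 : ℝ} {A : ℝ → ℝ} {h : ℤ} {n : ℕ} {a : ℤ → ℝ}
    {o : ℝ → ℝ} (hA : IsLaurentExpansion ε0 A h (h + n) a o) (hε0 : 0 < ε0) :
    (fun ε => A ε / ε ^ h - shiftedPoly a h n ε) =o[𝓝[>] 0] fun ε => ε ^ n := by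
  have hne : ∀ᶠ ε : ℝ in 𝓝[>] 0, ε ^ n ≠ 0 :=
    eventually_mem_nhdsWithin.mono fun ε (hε : 0 < ε) => pow_ne_zero n hε.ne'
  rw [isLittleO_iff_tendsto' (hne.mono fun ε hε h0 => absurd h0 hε)]
  refine hA.2.congr' ?_
  filter_upwards [Ioc_mem_nhdsGT hε0] with ε hε
  have hεne : ε ≠ 0 := hε.1.ne'
  rw [hA.1 ε hε, sum_Icc_mul_zpow_eq a h n hεne, zpow_add₀ hεne, zpow_natCast]
  field_simp
  ring

theorem isLaurentExpansion_of_isLittleO {ε0 : ℝ} {A : ℝ → ℝ} {h : ℤ} {n : ℕ} {a : ℤ → ℝ}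
    (hA : (fun ε => A ε / ε ^ h - shiftedPoly a h n ε) =o[𝓝[>] 0] fun ε => ε ^ n) :
    IsLaurentExpansion ε0 A h (h + n) a fun ε => A ε - ∑ l ∈ Icc h (h + n), a l * ε ^ l := by
  refine ⟨fun ε _ => by ring, hA.tendsto_div_nhds_zero.congr' ?_⟩
  filter_upwards [self_mem_nhdsWithin] with ε (hε : 0 < ε)
  rw [sum_Icc_mul_zpow_eq a h n hε.ne', zpow_add₀ hε.ne', zpow_natCast]
  field_simp

theorem IsLaurentExpansion.tendsto_div_zpow {ε0 : ℝ} {A : ℝ → ℝ} {h : ℤ} {n : ℕ} {a : ℤ → ℝ}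
    {o : ℝ → ℝ} (hA : IsLaurentExpansion ε0 A h (h + n) a o) (hε0 : 0 < ε0) :
    Tendsto (fun ε => A ε / ε ^ h) (𝓝[>] 0) (𝓝 (a h)) := by
  have hpow : (fun ε : ℝ => ε ^ n) =O[𝓝[>] 0] fun _ => (1 : ℝ) :=
    (((continuous_pow n).tendsto 0).mono_left nhdsWithin_le_nhds).isBigO_one ℝ
  simpa using ((isLittleO_one_iff ℝ).1 ((hA.isLittleO_s14 hε0).trans_isBigO hpow)).add
    (tendsto_shiftedPoly a h n)

theorem IsLaurentExpansion.div {ε0 : ℝ} {A B : ℝ → ℝ} {h h' : ℤ} {n n' : ℕ} {a b : ℤ → ℝ}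
    {oA oB : ℝ → ℝ} (hA : IsLaurentExpansion ε0 A h (h + n) a oA)
    (hB : IsLaurentExpansion ε0 B h' (h' + n') b oB) (hε0 : 0 < ε0) (hb : b h' ≠ 0) :
    ∃ (c : ℤ → ℝ) (oc : ℝ → ℝ),
      IsLaurentExpansion ε0 (fun ε => A ε / B ε) (h - h') (h - h' + ↑(min n n')) c oc ∧
      c (h - h') = a h / b h' := by
  set N := min n n'
  have hq0 : shiftedPoly b h' n' 0 ≠ 0 := by rwa [shiftedPoly_zero]
  obtain ⟨ps, hps⟩ := (analyticAt_shiftedPoly a h n 0).div (analyticAt_shiftedPoly b h' n' 0) hq0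
  have hquot : (fun ε => A ε / ε ^ h / (B ε / ε ^ h') -
      shiftedPoly a h n ε / shiftedPoly b h' n' ε) =o[𝓝[>] 0] fun ε => ε ^ N :=
    div_sub_div_isLittleO
      ((hA.isLittleO_s14 hε0).trans_isBigO ((isBigO_pow_pow_of_le (min_le_left n n')).mono
        nhdsWithin_le_nhds))
      ((hB.isLittleO_s14 hε0).trans_isBigO ((isBigO_pow_pow_of_le (min_le_right n n')).mono
        nhdsWithin_le_nhds))
      ((((continuous_pow N).tendsto 0).mono_left nhdsWithin_le_nhds).isBigO_one ℝ)
      (tendsto_shiftedPoly a h n) (tendsto_shiftedPoly b h' n') hb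
  refine ⟨fun l => ps.coeff (l - (h - h')).toNat, _, isLaurentExpansion_of_isLittleO ?_, ?_⟩
  · refine (hquot.add ((hps.isLittleO_sub_sum_coeff N).mono nhdsWithin_le_nhds)).congr' ?_
      EventuallyEq.rfl
    filter_upwards [self_mem_nhdsWithin] with ε (hε : 0 < ε)
    simp only [shiftedPoly, Pi.div_apply, add_sub_cancel_left, Int.toNat_natCast]
    rw [sub_add_sub_cancel, zpow_sub₀ hε.ne']
    ring
  · show ps.coeff (h - h' - (h - h')).toNat = _
    rw [sub_self, Int.toNat_zero, FormalMultilinearSeries.coeff, hps.coeff_zero, Pi.div_apply,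
      shiftedPoly_zero, shiftedPoly_zero]

theorem IsLaurentExpansion.order_le_and_pos_of_le {ε0 : ℝ} {A B : ℝ → ℝ} {h h' : ℤ} {n n' : ℕ}
    {a b : ℤ → ℝ} {oA oB : ℝ → ℝ} (hA : IsLaurentExpansion ε0 A h (h + n) a oA)
    (hB : IsLaurentExpansion ε0 B h' (h' + n') b oB) (hε0 : 0 < ε0) (ha : 0 < a h)
    (hb : b h' ≠ 0) (hAB : ∀ ε ∈ Set.Ioc (0:ℝ) ε0, 0 < A ε ∧ A ε ≤ B ε) :
    h' ≤ h ∧ 0 < b h' := by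
  have hIoc := Ioc_mem_nhdsGT hε0
  have hAlim := hA.tendsto_div_zpow hε0
  have hBlim := hB.tendsto_div_zpow hε0
  have hbpos : 0 < b h' := by
    refine lt_of_le_of_ne (ge_of_tendsto hBlim ?_) hb.symm
    filter_upwards [hIoc] with ε hε
    exact div_nonneg ((hAB ε hε).1.trans_le (hAB ε hε).2).le (zpow_pos hε.1 _).le
  refine ⟨?_, hbpos⟩
  by_contra! hlt
  obtain ⟨d, hd⟩ := Int.le.dest hlt
  -- `A / ε^h ≤ (B / ε^h') ε^(d+1)`, and the right side tends to `b h' · 0 = 0`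
  have hupper : Tendsto (fun ε => B ε / ε ^ h' * ε ^ (d + 1)) (𝓝[>] 0) (𝓝 0) := by
    simpa using hBlim.mul (((continuous_pow (d + 1)).tendsto 0).mono_left nhdsWithin_le_nhds)
  refine ha.not_ge (le_of_tendsto_of_tendsto hAlim hupper ?_)
  filter_upwards [hIoc] with ε hε
  have hsplit : ε ^ h' = ε ^ h * ε ^ (d + 1) := by
    rw [← zpow_natCast, ← zpow_add₀ hε.1.ne', ← hd]
    push_cast
    ring_nf
  rw [hsplit, ← div_div, div_mul_cancel₀ _ (pow_ne_zero _ hε.1.ne')]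
  exact div_le_div_of_nonneg_right (hAB ε hε).2 (zpow_pos hε.1 h).le

theorem stationary_prob_quotient_expansion_general (ε0 : ℝ) (hε0 : 0 < ε0)
    (e E : ℝ → ℝ) (mLo mHi MLo MHi : ℤ) (hm : mLo ≤ mHi) (hM : MLo ≤ MHi)
    (b B : ℤ → ℝ) (ob oB : ℝ → ℝ)
    (He : IsLaurentExpansion ε0 e mLo mHi b ob) (hbpos : 0 < b mLo)
    (HE : IsLaurentExpansion ε0 E MLo MHi B oB) (hBpiv : B MLo ≠ 0)
    (hord : ∀ ε ∈ Set.Ioc (0:ℝ) ε0, 0 < e ε ∧ e ε ≤ E ε) :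
    MLo ≤ mLo ∧ 0 ≤ mLo - MLo ∧
    ∃ (c : ℤ → ℝ) (oc : ℝ → ℝ),
      IsLaurentExpansion ε0 (fun ε => e ε / E ε) (mLo - MLo)
        (min (mHi - MLo) (MHi - 2 * MLo + mLo)) c oc ∧
      c (mLo - MLo) = b mLo / B MLo ∧ 0 < c (mLo - MLo) := by
  obtain ⟨n, rfl⟩ := Int.le.dest hm
  obtain ⟨n', rfl⟩ := Int.le.dest hM
  obtain ⟨hMm, hBpos⟩ := He.order_le_and_pos_of_le HE hε0 hbpos hBpiv hord
  obtain ⟨c, oc, hc, hc0⟩ := He.div HE hε0 hBpiv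
  have hhi : min (mLo + n - MLo) (MLo + n' - 2 * MLo + mLo) = mLo - MLo + ↑(min n n') := by
    omega
  exact ⟨hMm, sub_nonneg.2 hMm, c, oc, hhi ▸ hc, hc0, hc0 ▸ div_pos hbpos hBpos⟩

/-- if `0 < e i (ε) ≤ E ii (ε)`, `e i` has a pivotal Laurent
`(m⁻, m⁺)`-expansion with positive leading coefficient and `E ii` has a pivotal Laurent
`(M⁻, M⁺)`-expansion, then `M⁻ ≤ m⁻`, and the stationary probability
`π i (ε) = e i (ε) / E ii (ε)` has a pivotal Laurent `(n⁻, n⁺)`-expansion with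
`n⁻ = m⁻ - M⁻ ≥ 0`, `n⁺ = min (m⁺ - M⁻) (M⁺ - 2M⁻ + m⁻)` and positive leading
coefficient `b m⁻ / B M⁻`. -/
theorem stationary_prob_quotient_expansion (ε0 : ℝ) (hε0 : 0 < ε0) (hε1 : ε0 ≤ 1)
    (e E : ℝ → ℝ) (mLo mHi MLo MHi : ℤ) (hm : mLo ≤ mHi) (hM : MLo ≤ MHi)
    (b B : ℤ → ℝ) (ob oB : ℝ → ℝ)
    (He : IsLaurentExpansion ε0 e mLo mHi b ob) (hbpos : 0 < b mLo)
    (HE : IsLaurentExpansion ε0 E MLo MHi B oB) (hBpiv : B MLo ≠ 0)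
    (hord : ∀ ε ∈ Set.Ioc (0:ℝ) ε0, 0 < e ε ∧ e ε ≤ E ε) :
    MLo ≤ mLo ∧ 0 ≤ mLo - MLo ∧
    ∃ (c : ℤ → ℝ) (oc : ℝ → ℝ),
      IsLaurentExpansion ε0 (fun ε => e ε / E ε) (mLo - MLo)
        (min (mHi - MLo) (MHi - 2 * MLo + mLo)) c oc ∧
      c (mLo - MLo) = b mLo / B MLo ∧ 0 < c (mLo - MLo) :=
  stationary_prob_quotient_expansion_general ε0 hε0 e E mLo mHi MLo MHi hm hM b B ob oB He hbpos HE
    hBpiv hord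
end

section
/- Suppose functions π_i(ε) > 0, i ∈ X (X finite), satisfy Σ_{i ∈ X} π_i(ε) = 1 for all ε ∈ (0, ε₀], and each π_i admits a pivotal Laurent (n⁻_i, n⁺_i)-expansion π_i(ε) = Σ_{l = n⁻_i}^{n⁺_i} c_i[l] ε^l + o_i(ε^{n⁺_i}) with c_i[n⁻_i] > 0 and n⁻_i ≥ 0. Then: (1) min_{i ∈ X} n⁻_i = 0; (2) Σ_{i ∈ X} c_i[l] = I(l = 0) for all 0 ≤ l ≤ min_{i ∈ X} n⁺_i (coefficients taken as 0 for l < n⁻_i); and (3) for each i, lim_{ε→0+} π_i(ε) exists and equals c_i[0] > 0 if n⁻_i = 0 and equals 0 if n⁻_i > 0. -/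
/-!
Truncating each expansion at order `m = min nHi` gives `πᵢ(ε) = Σ_{l=0}^{m} cᵢ[l] εˡ + o(εᵐ)`,
with `cᵢ[l] = 0` below `nLo i`. Summing over `i` yields an expansion of the constant `1`, whose
coefficients are `I(l = 0)` by uniqueness of asymptotic expansions: a polynomial in `ε` that is
`o(εᵐ)` as `ε → 0+` has no coefficient of order `≤ m`, since its lowest nonzero term would be
`o` of itself. The case `l = 0` forces some `nLo i` to vanish, and the truncation at `m = 0`
gives the limits.
-/

open Filter Topology

open Asymptotics

lemma eventually_zpow_ne_zero_nhdsGT (n : ℤ) : ∀ᶠ ε : ℝ in 𝓝[>] 0, ε ^ n ≠ 0 :=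
  eventually_nhdsWithin_of_forall fun ε (hε : 0 < ε) => zpow_ne_zero n hε.ne'

lemma isLittleO_zpow_iff_tendsto_div {f : ℝ → ℝ} {m : ℤ} :
    f =o[𝓝[>] 0] (fun ε => ε ^ m) ↔ Tendsto (fun ε => f ε / ε ^ m) (𝓝[>] 0) (𝓝 0) :=
  isLittleO_iff_tendsto' ((eventually_zpow_ne_zero_nhdsGT m).mono fun _ hε h0 => absurd h0 hε)

lemma zpow_isLittleO_zpow_of_lt {m n : ℤ} (h : m < n) :
    (fun ε : ℝ => ε ^ n) =o[𝓝[>] 0] (fun ε => ε ^ m) := by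
  rw [isLittleO_zpow_iff_tendsto_div]
  have hpow : Tendsto (fun ε : ℝ => ε ^ (n - m)) (𝓝[>] 0) (𝓝 0) := by
    have := (continuousAt_zpow₀ (0 : ℝ) (n - m) (Or.inr (by omega))).tendsto
    rw [zero_zpow _ (by omega)] at this
    exact this.mono_left nhdsWithin_le_nhds
  refine hpow.congr' (eventually_nhdsWithin_of_forall fun ε hε => ?_)
  rw [zpow_sub₀ (ne_of_gt hε)]

lemma zpow_isBigO_zpow_of_le {m n : ℤ} (h : m ≤ n) :
    (fun ε : ℝ => ε ^ n) =O[𝓝[>] 0] (fun ε => ε ^ m) := by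
  rcases h.lt_or_eq with h | rfl
  · exact (zpow_isLittleO_zpow_of_lt h).isBigO
  · exact isBigO_refl _ _

lemma sum_mul_zpow_isLittleO_zpow {s : Finset ℤ} {m : ℤ} (a : ℤ → ℝ) (hs : ∀ l ∈ s, m < l) :
    (fun ε : ℝ => ∑ l ∈ s, a l * ε ^ l) =o[𝓝[>] 0] (fun ε => ε ^ m) := by
  have := IsLittleO.sum fun l hl => (zpow_isLittleO_zpow_of_lt (hs l hl)).const_mul_left (a l)
  simpa only [Finset.sum_fn] using this

lemma coeff_eq_zero_of_sum_mul_zpow_isLittleO {m : ℤ} {a : ℤ → ℝ}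
    (h : (fun ε : ℝ => ∑ l ∈ Finset.Icc 0 m, a l * ε ^ l) =o[𝓝[>] 0] (fun ε => ε ^ m)) :
    ∀ l ∈ Finset.Icc 0 m, a l = 0 := by
  classical
  by_contra! hex
  set s := (Finset.Icc 0 m).filter (a · ≠ 0)
  have hs : s.Nonempty := hex.imp fun l ⟨hl, hal⟩ => Finset.mem_filter.2 ⟨hl, hal⟩
  set n := s.min' hs
  obtain ⟨hn, han⟩ := Finset.mem_filter.1 (s.min'_mem hs)
  have hrest : (fun ε : ℝ => ∑ l ∈ (Finset.Icc 0 m).erase n, a l * ε ^ l)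
      =o[𝓝[>] 0] (fun ε => ε ^ n) := by
    refine (IsLittleO.sum fun l hl => ?_).congr_left fun ε => Finset.sum_apply ε _ _
    obtain ⟨hln, hl⟩ := Finset.mem_erase.1 hl
    by_cases hal : a l = 0
    · simpa only [hal, zero_mul] using isLittleO_zero _ _
    · have hnl : n ≤ l := s.min'_le l (Finset.mem_filter.2 ⟨hl, hal⟩)
      exact (zpow_isLittleO_zpow_of_lt (lt_of_le_of_ne hnl hln.symm)).const_mul_left (a l)
  have hlead : (fun ε : ℝ => a n * ε ^ n) =o[𝓝[>] 0] (fun ε => ε ^ n) :=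
    ((h.trans_isBigO (zpow_isBigO_zpow_of_le (Finset.mem_Icc.1 hn).2)).sub hrest).congr_left
      fun ε => by rw [← Finset.add_sum_erase _ _ hn]; ring
  refine isLittleO_irrefl ?_ ((isLittleO_const_mul_left_iff han).1 hlead)
  exact (eventually_zpow_ne_zero_nhdsGT n).frequently

lemma eq_of_sub_sum_mul_zpow_isLittleO {F : ℝ → ℝ} {m : ℤ} {a b : ℤ → ℝ}
    (ha : (fun ε => F ε - ∑ l ∈ Finset.Icc 0 m, a l * ε ^ l) =o[𝓝[>] 0] (fun ε => ε ^ m))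
    (hb : (fun ε => F ε - ∑ l ∈ Finset.Icc 0 m, b l * ε ^ l) =o[𝓝[>] 0] (fun ε => ε ^ m)) :
    ∀ l ∈ Finset.Icc 0 m, a l = b l := by
  have hdiff := coeff_eq_zero_of_sum_mul_zpow_isLittleO (a := fun l => a l - b l)
    ((hb.sub ha).congr_left fun ε => by simp only [sub_mul, Finset.sum_sub_distrib]; ring)
  exact fun l hl => sub_eq_zero.1 (hdiff l hl)

namespace IsLaurentExpansion

variable {ε0 : ℝ} {A o : ℝ → ℝ} {h k : ℤ} {a : ℤ → ℝ}

lemma sub_sum_isLittleO (hε0 : 0 < ε0) (he : IsLaurentExpansion ε0 A h k a o) (h0 : 0 ≤ h)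
    {m : ℤ} (hm : m ≤ k) :
    (fun ε => A ε - ∑ l ∈ Finset.Icc 0 m, (if h ≤ l then a l else 0) * ε ^ l)
      =o[𝓝[>] 0] (fun ε => ε ^ m) := by
  classical
  have hlow : (Finset.Icc h k).filter (· ≤ m) = (Finset.Icc 0 m).filter (h ≤ ·) := by
    ext l
    simp only [Finset.mem_filter, Finset.mem_Icc]
    omega
  have hhigh := sum_mul_zpow_isLittleO_zpow a (s := (Finset.Icc h k).filter (¬ · ≤ m))
    fun l hl => not_le.1 (Finset.mem_filter.1 hl).2
  have hrem := (isLittleO_zpow_iff_tendsto_div.2 he.2).trans_isBigO (zpow_isBigO_zpow_of_le hm)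
  refine (hhigh.add hrem).congr' ?_ EventuallyEq.rfl
  filter_upwards [Ioc_mem_nhdsGT hε0] with ε hε
  rw [he.1 ε hε, ← Finset.sum_filter_add_sum_filter_not (Finset.Icc h k) (· ≤ m), hlow]
  simp only [Finset.sum_filter, ite_mul, zero_mul]
  ring

lemma tendsto (hε0 : 0 < ε0) (he : IsLaurentExpansion ε0 A h k a o) (h0 : 0 ≤ h)
    (hk : 0 ≤ k) : Tendsto A (𝓝[>] 0) (𝓝 (if h = 0 then a 0 else 0)) := by
  have hA := he.sub_sum_isLittleO hε0 h0 hk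
  simp only [Finset.Icc_self, Finset.sum_singleton, zpow_zero, mul_one,
    show h ≤ 0 ↔ h = 0 by omega] at hA
  exact tendsto_sub_nhds_zero_iff.1 ((isLittleO_one_iff ℝ).1 hA)

end IsLaurentExpansion

theorem stationary_probabilities_expansion_properties_general (ε0 : ℝ) (hε0 : 0 < ε0)
    (X : Type*) [Fintype X]
    (hne : (Finset.univ : Finset X).Nonempty)
    (π : X → ℝ → ℝ) (nLo nHi : X → ℤ) (c : X → ℤ → ℝ) (o : X → ℝ → ℝ)
    (hn0 : ∀ i, 0 ≤ nLo i) (hnn : ∀ i, nLo i ≤ nHi i)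
    (hexp : ∀ i, IsLaurentExpansion ε0 (π i) (nLo i) (nHi i) (c i) (o i))
    (hpiv : ∀ i, 0 < c i (nLo i))
    (hsum : ∀ ε ∈ Set.Ioc (0:ℝ) ε0, ∑ i, π i ε = 1) :
    (Finset.univ.inf' hne nLo = 0) ∧
    (∀ l : ℤ, 0 ≤ l → l ≤ Finset.univ.inf' hne nHi →
      (∑ i, if nLo i ≤ l then c i l else 0) = if l = 0 then 1 else 0) ∧
    (∀ i, Filter.Tendsto (π i) (nhdsWithin 0 (Set.Ioi 0))
        (nhds (if nLo i = 0 then c i 0 else 0)) ∧ (nLo i = 0 → 0 < c i 0)) := by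
  set m := Finset.univ.inf' hne nHi
  have hm0 : 0 ≤ m := Finset.le_inf' hne nHi fun i _ => (hn0 i).trans (hnn i)
  have hsum_exp : (fun ε => ∑ i, π i ε -
      ∑ l ∈ Finset.Icc 0 m, (∑ i, if nLo i ≤ l then c i l else 0) * ε ^ l)
      =o[𝓝[>] 0] (fun ε => ε ^ m) := by
    refine (IsLittleO.sum (s := Finset.univ) fun i _ => (hexp i).sub_sum_isLittleO hε0 (hn0 i)
      (Finset.inf'_le nHi (Finset.mem_univ i))).congr_left fun ε => ?_
    simp only [Finset.sum_apply, Finset.sum_sub_distrib, Finset.sum_mul]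
    rw [Finset.sum_comm]
  have hone_exp : (fun ε => ∑ i, π i ε - ∑ l ∈ Finset.Icc 0 m, (if l = 0 then 1 else 0) * ε ^ l)
      =o[𝓝[>] 0] (fun ε => ε ^ m) := by
    refine (isLittleO_zero _ _).congr' ?_ EventuallyEq.rfl
    filter_upwards [Ioc_mem_nhdsGT hε0] with ε hε
    simp [hsum ε hε, hm0]
  have hcoeff := eq_of_sub_sum_mul_zpow_isLittleO hsum_exp hone_exp
  have hmin : Finset.univ.inf' hne nLo = 0 := by
    have hsum0 : (∑ i, if nLo i ≤ 0 then c i 0 else 0) = 1 :=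
      hcoeff 0 (Finset.mem_Icc.2 ⟨le_rfl, hm0⟩)
    obtain ⟨i, -, hi⟩ := Finset.exists_ne_zero_of_sum_ne_zero (hsum0 ▸ one_ne_zero)
    have hi0 : nLo i ≤ 0 := by_contra fun hlt => hi (if_neg hlt)
    exact le_antisymm ((Finset.inf'_le nLo (Finset.mem_univ i)).trans hi0)
      (Finset.le_inf' hne nLo fun i _ => hn0 i)
  refine ⟨hmin, fun l hl hlm => hcoeff l (Finset.mem_Icc.2 ⟨hl, hlm⟩), fun i => ⟨?_, ?_⟩⟩
  · exact (hexp i).tendsto hε0 (hn0 i) ((hn0 i).trans (hnn i))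
  · exact fun hi => hi ▸ hpiv i

/-- properties of Laurent expansions of stationary probabilities summing
to one: the minimal order is zero, the coefficients sum to `I(l = 0)` up to the minimal
upper order, and each probability converges as `ε → 0+` to its zero-order coefficient
(positive when the lower order is zero, and to `0` otherwise). -/
theorem stationary_probabilities_expansion_properties (ε0 : ℝ) (hε0 : 0 < ε0)
    (hε1 : ε0 ≤ 1) (X : Type*) [Fintype X]
    (hne : (Finset.univ : Finset X).Nonempty)
    (π : X → ℝ → ℝ) (nLo nHi : X → ℤ) (c : X → ℤ → ℝ) (o : X → ℝ → ℝ)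
    (hn0 : ∀ i, 0 ≤ nLo i) (hnn : ∀ i, nLo i ≤ nHi i)
    (hexp : ∀ i, IsLaurentExpansion ε0 (π i) (nLo i) (nHi i) (c i) (o i))
    (hpiv : ∀ i, 0 < c i (nLo i))
    (hpos : ∀ i, ∀ ε ∈ Set.Ioc (0:ℝ) ε0, 0 < π i ε)
    (hsum : ∀ ε ∈ Set.Ioc (0:ℝ) ε0, ∑ i, π i ε = 1) :
    (Finset.univ.inf' hne nLo = 0) ∧
    (∀ l : ℤ, 0 ≤ l → l ≤ Finset.univ.inf' hne nHi →
      (∑ i, if nLo i ≤ l then c i l else 0) = if l = 0 then 1 else 0) ∧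
    (∀ i, Filter.Tendsto (π i) (nhdsWithin 0 (Set.Ioi 0))
        (nhds (if nLo i = 0 then c i 0 else 0)) ∧ (nLo i = 0 → 0 < c i 0)) :=
  stationary_probabilities_expansion_properties_general ε0 hε0 X hne π nLo nHi c o hn0 hnn hexp hpiv
    hsum
end

section
/- Let η_n be a Markov chain on finite X such that for every pair of states i, j there is a path i = l_0, l_1, …, l_n = j with each transition probability p_{l_{m} l_{m+1}}(ε) > 0 for all ε ∈ (0, ε₀] (condition A). Fix r ∈ X and let _r Y_i = {j ∈ X \ {r} : _r p_{ij}(ε) > 0, ε ∈ (0, ε₀]} be the transition sets of the reduced chain on X \ {r}, where _r p_{ij}(ε) = p_{ij}(ε) + p_{ir}(ε) p_{rj}(ε)/(1 − p_{rr}(ε)). Then _r Y_i = Y⁻_{ir} ∪ Y⁺_{ir}, where Y⁺_{ir} = {j ∈ X \ {r} : j ∈ Y_i} and Y⁻_{ir} = {j ∈ X \ {r} : j ∈ Y_r} if r ∈ Y_i and Y⁻_{ir} = ∅ otherwise; moreover the reduced chain also satisfies condition A on X \ {r} with these transition sets. -/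
/-!
Since all probabilities are nonnegative and `p r r < 1`, the reduced probability
`p i j + p i r * p r j / (1 - p r r)` is positive exactly when `i → j` or `i → r → j` is a
positive step, and transitions outside `Y` vanish identically. Hence `_r Y_i` is the set of
one-step successors of `i` in the graph of `Y` with `r` bypassed, and a path between two states
other than `r` in the original graph becomes a path in the reduced one by replacing each detour
through `r` with a single step.
-/

open Relation

namespace Relation

variable {α : Type*} {R : α → α → Prop}

def bypass (R : α → α → Prop) (r a b : α) : Prop :=
  b ≠ r ∧ (R a b ∨ R a r ∧ R r b)

theorem transGen_of_path {l : ℕ → α} :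
    ∀ {n : ℕ}, 1 ≤ n → (∀ m < n, R (l m) (l (m + 1))) → TransGen R (l 0) (l n)
  | 0, hn, _ => absurd hn (by decide)
  | 1, _, hstep => .single (hstep 0 one_pos)
  | n + 2, _, hstep =>
    (transGen_of_path (n := n + 1) (by omega) fun m hm => hstep m (by omega)).tail
      (hstep (n + 1) (by omega))

theorem exists_path_of_transGen {a b : α} (h : TransGen R a b) :
    ∃ n, 1 ≤ n ∧ ∃ l : ℕ → α, l 0 = a ∧ l n = b ∧ ∀ m < n, R (l m) (l (m + 1)) := by
  induction h with
  | single hab => exact ⟨1, le_rfl, fun m => if m = 0 then a else _, rfl, rfl, by simpa⟩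
  | @tail c d _ hcd ih =>
    obtain ⟨n, hn, l, hl0, hln, hstep⟩ := ih
    refine ⟨n + 1, by omega, fun m => if m ≤ n then l m else d, by simpa, by simp, ?_⟩
    intro m hm
    rcases Nat.lt_or_ge m n with hlt | hge
    · simpa [hlt.le, Nat.succ_le_of_lt hlt] using hstep m hlt
    · obtain rfl : m = n := by omega
      simpa [hln] using hcd

theorem transGen_iff_exists_path {a b : α} :
    TransGen R a b ↔
      ∃ n, 1 ≤ n ∧ ∃ l : ℕ → α, l 0 = a ∧ l n = b ∧ ∀ m < n, R (l m) (l (m + 1)) := by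
  refine ⟨exists_path_of_transGen, ?_⟩
  rintro ⟨n, hn, l, rfl, rfl, hstep⟩
  exact transGen_of_path hn hstep

/-- The second conjunct strengthens the induction: a path leaving `r` can be entered from any
`c` with `R c r`. -/
theorem transGen_bypass_of_transGen {r a b : α} (h : TransGen R a b) (hb : b ≠ r) :
    (a ≠ r → TransGen (bypass R r) a b) ∧
      (a = r → ∀ c, c ≠ r → R c r → TransGen (bypass R r) c b) := by
  induction h using TransGen.head_induction_on with
  | single hab =>
    refine ⟨fun _ => .single ⟨hb, .inl hab⟩, ?_⟩
    rintro rfl c _ hcr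
    exact .single ⟨hb, .inr ⟨hcr, hab⟩⟩
  | @head a c hac _ ih =>
    obtain ⟨ih_ne, ih_eq⟩ := ih
    by_cases hc : c = r
    · subst hc
      refine ⟨fun ha => ih_eq rfl a ha hac, ?_⟩
      rintro rfl d hd hdr
      exact ih_eq rfl d hd hdr
    · refine ⟨fun _ => .head ⟨hc, .inl hac⟩ (ih_ne hc), ?_⟩
      rintro rfl d _ hdr
      exact .head ⟨hc, .inr ⟨hdr, hac⟩⟩ (ih_ne hc)

theorem TransGen.bypass {r a b : α} (h : TransGen R a b) (ha : a ≠ r) (hb : b ≠ r) :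
    TransGen (bypass R r) a b :=
  (transGen_bypass_of_transGen h hb).1 ha

end Relation

theorem pos_add_mul_div_one_sub_iff {a b c d : ℝ} (ha : 0 ≤ a) (hb : 0 ≤ b) (hc : 0 ≤ c)
    (hd : d < 1) : 0 < a + b * c / (1 - d) ↔ 0 < a ∨ 0 < b ∧ 0 < c := by
  have hden : 1 - d ≠ 0 := (sub_pos.2 hd).ne'
  have hq : 0 ≤ b * c / (1 - d) := div_nonneg (mul_nonneg hb hc) (sub_pos.2 hd).le
  rw [(add_nonneg ha hq).lt_iff_ne', ha.lt_iff_ne', hb.lt_iff_ne', hc.lt_iff_ne', ne_eq,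
    add_eq_zero_iff_of_nonneg ha hq, div_eq_zero_iff, mul_eq_zero]
  tauto

theorem forall_pos_reduced_iff {X : Type*} {S : Set ℝ} {p : X → X → ℝ → ℝ} {Y : X → Finset X}
    {r i j : X}
    (hnn : ∀ i j, ∀ ε ∈ S, 0 ≤ p i j ε)
    (hYchar : ∀ i j, j ∈ Y i ↔ ∀ ε ∈ S, 0 < p i j ε)
    (hzero : ∀ i j, j ∉ Y i → ∀ ε ∈ S, p i j ε = 0)
    (hrr : ∀ ε ∈ S, p r r ε < 1) :
    (∀ ε ∈ S, 0 < p i j ε + p i r ε * p r j ε / (1 - p r r ε)) ↔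
      j ∈ Y i ∨ r ∈ Y i ∧ j ∈ Y r := by
  have key : ∀ ε ∈ S, 0 < p i j ε + p i r ε * p r j ε / (1 - p r r ε) ↔
      0 < p i j ε ∨ 0 < p i r ε ∧ 0 < p r j ε := fun ε hε =>
    pos_add_mul_div_one_sub_iff (hnn i j ε hε) (hnn i r ε hε) (hnn r j ε hε) (hrr ε hε)
  simp only [hYchar]
  constructor
  · intro h
    by_cases hij : j ∈ Y i
    · exact .inl ((hYchar i j).1 hij)
    · have hvia : ∀ ε ∈ S, 0 < p i r ε ∧ 0 < p r j ε := fun ε hε =>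
        ((key ε hε).1 (h ε hε)).resolve_left (by simp [hzero i j hij ε hε])
      exact .inr ⟨fun ε hε => (hvia ε hε).1, fun ε hε => (hvia ε hε).2⟩
  · rintro (h | ⟨hir, hrj⟩) ε hε
    · exact (key ε hε).2 (.inl (h ε hε))
    · exact (key ε hε).2 (.inr ⟨hir ε hε, hrj ε hε⟩)

/-- The transition set `_r Y_i = Y⁺_{ir} ∪ Y⁻_{ir}` of the chain reduced at `r`. -/
def reducedSet {X : Type*} [DecidableEq X] (Y : X → Finset X) (r i : X) : Finset X :=
  (Y i).erase r ∪ (if r ∈ Y i then (Y r).erase r else ∅)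

theorem mem_reducedSet {X : Type*} [DecidableEq X] {Y : X → Finset X} {r i j : X} :
    j ∈ reducedSet Y r i ↔ bypass (fun a b => b ∈ Y a) r i j := by
  unfold reducedSet bypass
  split_ifs with hr <;> aesop

theorem reduced_chain_transition_sets_general (ε0 : ℝ)
    (X : Type*) [DecidableEq X]
    (p : X → X → ℝ → ℝ) (Y : X → Finset X) (r : X)
    (hnn : ∀ i j, ∀ ε ∈ Set.Ioc (0:ℝ) ε0, 0 ≤ p i j ε)
    (hYchar : ∀ i j, j ∈ Y i ↔ ∀ ε ∈ Set.Ioc (0:ℝ) ε0, 0 < p i j ε)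
    (hzero : ∀ i j, j ∉ Y i → ∀ ε ∈ Set.Ioc (0:ℝ) ε0, p i j ε = 0)
    (hpathA : ∀ i j : X, ∃ n : ℕ, 1 ≤ n ∧ ∃ l : ℕ → X, l 0 = i ∧ l n = j ∧
      ∀ m < n, l (m + 1) ∈ Y (l m))
    (hrr : ∀ ε ∈ Set.Ioc (0:ℝ) ε0, p r r ε < 1) :
    (∀ i, i ≠ r → ∀ j, j ≠ r →
      ((j ∈ (Y i).erase r ∪ (if r ∈ Y i then (Y r).erase r else ∅)) ↔
        ∀ ε ∈ Set.Ioc (0:ℝ) ε0,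
          0 < p i j ε + p i r ε * p r j ε / (1 - p r r ε))) ∧
    (∀ i, i ≠ r → ∀ j, j ≠ r → ∃ n : ℕ, 1 ≤ n ∧ ∃ l : ℕ → X, l 0 = i ∧ l n = j ∧
      ∀ m < n, l (m + 1) ∈
        (Y (l m)).erase r ∪ (if r ∈ Y (l m) then (Y r).erase r else ∅)) := by
  refine ⟨fun i _ j hj => ?_, fun i hi j hj => ?_⟩
  · change j ∈ reducedSet Y r i ↔ _
    rw [mem_reducedSet, forall_pos_reduced_iff hnn hYchar hzero hrr]
    exact and_iff_right hj
  · have hpath : TransGen (fun a b => b ∈ Y a) i j := transGen_iff_exists_path.2 (hpathA i j)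
    have hreduced : TransGen (fun a b => b ∈ reducedSet Y r a) i j :=
      TransGen.mono (fun _ _ => mem_reducedSet.2) _ _ (hpath.bypass hi hj)
    exact transGen_iff_exists_path.1 hreduced

/-- Lemma 6: the transition sets of the reduced Markov chain on `X \ {r}`,
with reduced transition probabilities
`_r p i j (ε) = p i j (ε) + p i r (ε) * p r j (ε) / (1 - p r r (ε))`,
are `_r Y_i = Y⁻_{ir} ∪ Y⁺_{ir}` where `Y⁺_{ir} = Y_i \ {r}` and `Y⁻_{ir} = Y_r \ {r}`
if `r ∈ Y_i` and `∅` otherwise; moreover, the reduced chain again satisfies condition A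
(every pair of states in `X \ {r}` is connected by a chain of transitions through these
sets). -/
theorem reduced_chain_transition_sets (ε0 : ℝ) (hε0 : 0 < ε0) (hε1 : ε0 ≤ 1)
    (X : Type*) [Fintype X] [DecidableEq X] (hcard : 1 < Fintype.card X)
    (p : X → X → ℝ → ℝ) (Y : X → Finset X) (r : X)
    (hnn : ∀ i j, ∀ ε ∈ Set.Ioc (0:ℝ) ε0, 0 ≤ p i j ε)
    (hstoch : ∀ i, ∀ ε ∈ Set.Ioc (0:ℝ) ε0, ∑ j, p i j ε = 1)
    (hYchar : ∀ i j, j ∈ Y i ↔ ∀ ε ∈ Set.Ioc (0:ℝ) ε0, 0 < p i j ε)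
    (hzero : ∀ i j, j ∉ Y i → ∀ ε ∈ Set.Ioc (0:ℝ) ε0, p i j ε = 0)
    (hpathA : ∀ i j : X, ∃ n : ℕ, 1 ≤ n ∧ ∃ l : ℕ → X, l 0 = i ∧ l n = j ∧
      ∀ m < n, l (m + 1) ∈ Y (l m))
    (hrr : ∀ ε ∈ Set.Ioc (0:ℝ) ε0, p r r ε < 1) :
    (∀ i, i ≠ r → ∀ j, j ≠ r →
      ((j ∈ (Y i).erase r ∪ (if r ∈ Y i then (Y r).erase r else ∅)) ↔
        ∀ ε ∈ Set.Ioc (0:ℝ) ε0,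
          0 < p i j ε + p i r ε * p r j ε / (1 - p r r ε))) ∧
    (∀ i, i ≠ r → ∀ j, j ≠ r → ∃ n : ℕ, 1 ≤ n ∧ ∃ l : ℕ → X, l 0 = i ∧ l n = j ∧
      ∀ m < n, l (m + 1) ∈
        (Y (l m)).erase r ∪ (if r ∈ Y (l m) then (Y r).erase r else ∅)) :=
  reduced_chain_transition_sets_general ε0 X p Y r hnn hYchar hzero hpathA hrr
end
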